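/- Suppose $\mu_0$ and $\mu_\tau$ are equivalent measures on $Y$ preserved by $f^{\varphi}$ and $f^{\tau}$ respectively, with $\varphi = \tau_\rho$ and $\bar\rho=\int_Y\rho\,d\mu_0<\infty$. Then for all $n\ge1$: $\Big|\sum_{j\ge n}\big(\frac{1}{\bar\varphi}\mu_0(\varphi>j) - \frac{1}{\bar\tau}\mu_\tau(\tau>j)\big)\Big| \le \frac{1}{\bar\varphi}\sum_{k\ge1}\int_{\{\varphi=\tau_{k+1}>n\}} \tau_k\, d\mu_0$. -/

import Mathlib

/-!
Let `F` be the first-return map and `τ_k = τ + τ ∘ F + ⋯ + τ ∘ F^{k-1}`, so that `φ = τ_ρ`.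
Applying the defining formula of `μτ` to the sets `{τ > m}` and summing over `m ≥ n` gives
`ρ̄ ∑_{m ≥ n} μτ(τ > m) = ∫ ∑_{k < ρ} (τ ∘ F^k - n)⁺ dμ₀`; for `n = 0` this is Kac's formula
`φ̄ = ρ̄ τ̄`. On the other side `∑_{m ≥ n} μ₀(φ > m) = ∫ (φ - n)⁺ dμ₀`. Pointwise,
`∑_{k<ρ} (a_k - n)⁺ ≤ (∑_{k<ρ} a_k - n)⁺ ≤ (a_{ρ-1} - n)⁺ + a_0 + ⋯ + a_{ρ-2}`, so the difference of
the two integrands lies between `0` and `τ_{ρ-1} 1_{ρ ≥ 2, φ > n}`, which integrates to the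
right-hand side.

The return times need not be measurable. The formula for `μτ` pulls `μτ`-null sets back to
`μ₀`-null sets along `F^k` on `{ρ > k}`, which makes `τ ∘ F^k` a.e.-measurable there.
-/

open MeasureTheory

/-- First return time of `f` to `Y`. -/
noncomputable def tauFR {X : Type*} (f : X → X) (Y : Set X) (x : X) : ℕ :=
  sInf {n : ℕ | 1 ≤ n ∧ f^[n] x ∈ Y}

/-- The `k`-th return time to `Y`. -/
noncomputable def tauK {X : Type*} (f : X → X) (Y : Set X) : ℕ → X → ℕ
  | 0, _ => 0
  | k + 1, x => tauK f Y k x + tauFR f Y (f^[tauK f Y k x] x)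

open scoped ENNReal
open Finset

section ReturnTimes

variable {X : Type*} (f : X → X) (Y : Set X)

theorem iterate_tauK (k : ℕ) (y : X) :
    f^[tauK f Y k y] y = (fun x => f^[tauFR f Y x] x)^[k] y := by
  induction k with
  | zero => simp [tauK]
  | succ k ih =>
    rw [Function.iterate_succ_apply', ← ih]
    change f^[tauK f Y k y + tauFR f Y (f^[tauK f Y k y] y)] y = _
    rw [add_comm, Function.iterate_add_apply]

theorem tauK_eq_sum (k : ℕ) (y : X) :
    tauK f Y k y = ∑ i ∈ range k, tauFR f Y ((fun x => f^[tauFR f Y x] x)^[i] y) := by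
  induction k with
  | zero => simp [tauK]
  | succ k ih =>
    rw [sum_range_succ, ← ih, ← iterate_tauK]
    rfl

end ReturnTimes

theorem sum_tsub_le_tsub_sum (g : ℕ → ℕ) (n m : ℕ) :
    ∑ k ∈ range m, (g k - n) ≤ (∑ k ∈ range m, g k) - n := by
  induction m with
  | zero => simp
  | succ m ih =>
    rw [sum_range_succ, sum_range_succ]
    omega

theorem tsub_sum_le_sum_tsub_add (g : ℕ → ℕ) (n m : ℕ) :
    (∑ k ∈ range m, g k) - n ≤ ∑ k ∈ range m, (g k - n)
      + if 2 ≤ m ∧ n < ∑ k ∈ range m, g k then ∑ k ∈ range (m - 1), g k else 0 := by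
  match m with
  | 0 => simp
  | 1 => simp
  | m + 2 =>
    have hlast : g (m + 1) - n ≤ ∑ k ∈ range (m + 2), (g k - n) :=
      single_le_sum (f := fun k => g k - n) (fun _ _ => Nat.zero_le _) (by simp)
    rw [show m + 2 - 1 = m + 1 by omega, sum_range_succ g (m + 1)] at *
    split_ifs <;> omega

theorem tsum_ite_eq_add_two (g : ℕ → ℕ) (n m : ℕ) :
    (∑' k, if m = k + 2 ∧ n < ∑ i ∈ range m, g i then ((∑ i ∈ range (k + 1), g i : ℕ) : ℝ≥0∞)
      else 0) = ((if 2 ≤ m ∧ n < ∑ k ∈ range m, g k then ∑ k ∈ range (m - 1), g k else 0 : ℕ)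
        : ℝ≥0∞) := by
  split_ifs with h
  · rw [tsum_eq_single (m - 2) (fun k hk => if_neg (by omega)), if_pos (by omega)]
    congr 3
    omega
  · rw [Nat.cast_zero]
    exact ENNReal.tsum_eq_zero.2 fun k => if_neg fun ⟨hm, hs⟩ => h ⟨by omega, hs⟩

theorem tsub_sum_le_sum_tsub_add_tsum (g : ℕ → ℕ) (n m : ℕ) :
    (((∑ i ∈ range m, g i) - n : ℕ) : ℝ≥0∞) ≤ ∑ k ∈ range m, ((g k - n : ℕ) : ℝ≥0∞)
      + ∑' k, if m = k + 2 ∧ n < ∑ i ∈ range m, g i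
        then ((∑ i ∈ range (k + 1), g i : ℕ) : ℝ≥0∞) else 0 := by
  rw [tsum_ite_eq_add_two, ← Nat.cast_sum, ← Nat.cast_add, Nat.cast_le]
  exact tsub_sum_le_sum_tsub_add g n m

theorem tsum_ite_le_sum (g : ℕ → ℕ) (n m : ℕ) :
    (∑' k, if m = k + 2 ∧ n < ∑ i ∈ range m, g i then ((∑ i ∈ range (k + 1), g i : ℕ) : ℝ≥0∞)
      else 0) ≤ ((∑ i ∈ range m, g i : ℕ) : ℝ≥0∞) := by
  rw [tsum_ite_eq_add_two, Nat.cast_le]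
  split_ifs
  · exact sum_le_sum_of_subset (range_subset_range.2 (Nat.sub_le m 1))
  · exact Nat.zero_le _

section TailSums

variable {X : Type*} [MeasurableSpace X] {μ : Measure X}

theorem tsum_ite_add_lt (n m : ℕ) :
    ∑' j : ℕ, (if n + j < m then 1 else 0 : ℝ≥0∞) = ((m - n : ℕ) : ℝ≥0∞) := by
  rw [tsum_eq_sum (s := range (m - n)) fun j hj => if_neg (by simp at hj; omega),
    sum_congr rfl fun j hj => if_pos (by simp at hj; omega)]
  simp

theorem tsum_measure_add_lt {u : X → ℕ} (hu : AEMeasurable u μ) (n : ℕ) :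
    ∑' j, μ {x | n + j < u x} = ∫⁻ x, ((u x - n : ℕ) : ℝ≥0∞) ∂μ := by
  have hset : ∀ j, NullMeasurableSet {x | n + j < u x} μ :=
    fun j => hu.nullMeasurable measurableSet_Ioi
  have hind : ∀ x j, (if n + j < u x then 1 else 0 : ℝ≥0∞) = {x | n + j < u x}.indicator 1 x :=
    fun x j => by simp [Set.indicator_apply]
  simp_rw [← tsum_ite_add_lt, hind]
  rw [lintegral_tsum fun j => measurable_one.aemeasurable.indicator₀ (hset j)]
  exact tsum_congr fun j => (lintegral_indicator_one₀ (hset j)).symm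

theorem tsum_measure_lt {u : X → ℕ} (hu : AEMeasurable u μ) :
    ∑' j, μ {x | j < u x} = ∫⁻ x, (u x : ℝ≥0∞) ∂μ := by
  simpa using tsum_measure_add_lt hu 0

theorem tsum_toReal_measure_add_lt [IsFiniteMeasure μ] {u : X → ℕ} (hu : AEMeasurable u μ)
    (n : ℕ) : ∑' j, (μ {x | n + j < u x}).toReal = (∫⁻ x, ((u x - n : ℕ) : ℝ≥0∞) ∂μ).toReal := by
  rw [← tsum_measure_add_lt hu, ENNReal.tsum_toReal_eq fun _ => measure_ne_top _ _]

theorem aemeasurable_of_integrable_natCast {u : X → ℕ} (hu : Integrable (fun x => (u x : ℝ)) μ) :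
    AEMeasurable u μ := by
  simpa [Function.comp_def] using Nat.measurable_floor.comp_aemeasurable hu.aemeasurable

theorem lintegral_natCast_ne_top {u : X → ℕ} (hu : Integrable (fun x => (u x : ℝ)) μ) :
    ∫⁻ x, (u x : ℝ≥0∞) ∂μ ≠ ⊤ := by
  simpa using hu.lintegral_lt_top.ne

theorem tsum_measure_add_lt_ne_top {u : X → ℕ} (hu : Integrable (fun x => (u x : ℝ)) μ) (n : ℕ) :
    ∑' j, μ {x | n + j < u x} ≠ ⊤ := by
  rw [tsum_measure_add_lt (aemeasurable_of_integrable_natCast hu)]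
  exact ne_top_of_le_ne_top (lintegral_natCast_ne_top hu)
    (lintegral_mono fun x => Nat.cast_le.2 (Nat.sub_le _ _))

theorem integral_natCast_eq_toReal_lintegral {u : X → ℕ} (hu : AEMeasurable u μ) :
    ∫ x, (u x : ℝ) ∂μ = (∫⁻ x, (u x : ℝ≥0∞) ∂μ).toReal := by
  rw [integral_eq_lintegral_of_nonneg_ae (ae_of_all _ fun x => Nat.cast_nonneg _)
    (measurable_from_nat.comp_aemeasurable hu).aestronglyMeasurable]
  simp

end TailSums

theorem abs_one_div_mul_sub_le {a b C d r p t : ℝ} (hp : 0 ≤ p) (hr : r ≠ 0) (hprt : p = r * t)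
    (hb : r * b = C) (hCa : C ≤ a) (haC : a ≤ C + d) : |1 / p * a - 1 / t * b| ≤ 1 / p * d := by
  rcases eq_or_ne t 0 with rfl | ht
  · simp [hprt]
  have hbC : 1 / t * b = 1 / p * C := by
    rw [hprt, ← hb]
    field_simp
  rw [hbC, ← mul_sub, abs_of_nonneg (mul_nonneg (one_div_nonneg.2 hp) (sub_nonneg.2 hCa))]
  exact mul_le_mul_of_nonneg_left (by linarith) (one_div_nonneg.2 hp)

section Tower

variable {X : Type*}

def returnStep (F : X → X) (ρ τ : X → ℕ) (k : ℕ) (y : X) : ℕ :=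
  if k < ρ y then τ (F^[k] y) else 0

theorem lt_returnStep_iff {F : X → X} {ρ τ : X → ℕ} {k m : ℕ} {y : X} :
    m < returnStep F ρ τ k y ↔ k < ρ y ∧ m < τ (F^[k] y) := by
  unfold returnStep
  split_ifs with h <;> simp [h]

/-- `τ_{ρ-1} 1_{ρ ≥ 2, φ > n}`, split along the sets `{ρ = k + 2, φ > n}` of the right-hand side. -/
noncomputable def penultimateReturn (F : X → X) (ρ τ φ : X → ℕ) (n : ℕ) (y : X) : ℝ≥0∞ :=
  ∑' k : ℕ, {y | ρ y = k + 2 ∧ n < φ y}.indicator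
    (fun y => ((∑ i ∈ range (k + 1), τ (F^[i] y) : ℕ) : ℝ≥0∞)) y

section Pointwise

variable {F : X → X} {ρ τ φ : X → ℕ} (hφ : ∀ y, φ y = ∑ k ∈ range (ρ y), τ (F^[k] y))
include hφ

theorem penultimateReturn_le (n : ℕ) (y : X) : penultimateReturn F ρ τ φ n y ≤ φ y := by
  simpa only [penultimateReturn, Set.indicator_apply, Set.mem_ofPred_eq, hφ y]
    using tsum_ite_le_sum (fun i => τ (F^[i] y)) n (ρ y)

theorem sum_tsub_le_tsub (n : ℕ) (y : X) :
    ∑ k ∈ range (ρ y), ((τ (F^[k] y) - n : ℕ) : ℝ≥0∞) ≤ ((φ y - n : ℕ) : ℝ≥0∞) := by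
  rw [← Nat.cast_sum, hφ y, Nat.cast_le]
  exact sum_tsub_le_tsub_sum _ n _

theorem tsub_le_sum_tsub_add_penultimateReturn (n : ℕ) (y : X) :
    ((φ y - n : ℕ) : ℝ≥0∞)
      ≤ ∑ k ∈ range (ρ y), ((τ (F^[k] y) - n : ℕ) : ℝ≥0∞) + penultimateReturn F ρ τ φ n y := by
  simpa only [penultimateReturn, Set.indicator_apply, Set.mem_ofPred_eq, hφ y]
    using tsub_sum_le_sum_tsub_add_tsum (fun i => τ (F^[i] y)) n (ρ y)

end Pointwise

variable [MeasurableSpace X]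

/-- The paper's `μ_τ(A) = ρ̄⁻¹ ∑ₖ μ₀({ρ > k} ∩ F⁻ᵏ A)`, with `c` in place of `ρ̄`. -/
def IsTowerAverage (μτ μ0 : Measure X) (F : X → X) (ρ : X → ℕ) (c : ℝ) : Prop :=
  ∀ A, MeasurableSet A →
    (μτ A).toReal = 1 / c * ∑' k : ℕ, (μ0 {y | k < ρ y ∧ F^[k] y ∈ A}).toReal

theorem tsum_measure_lt_and_mem_ne_top {μ0 : Measure X} {ρ : X → ℕ}
    (hρ : Integrable (fun x => (ρ x : ℝ)) μ0) (F : X → X) (A : Set X) :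
    ∑' k : ℕ, μ0 {y | k < ρ y ∧ F^[k] y ∈ A} ≠ ⊤ := by
  have hle : ∀ k : ℕ, μ0 {y | k < ρ y ∧ F^[k] y ∈ A} ≤ μ0 {y | k < ρ y} :=
    fun k => measure_mono fun y hy => hy.1
  refine ne_top_of_le_ne_top ?_ (ENNReal.tsum_le_tsum hle)
  rw [tsum_measure_lt (aemeasurable_of_integrable_natCast hρ)]
  exact lintegral_natCast_ne_top hρ

theorem nullMeasurableSet_eq_add_two {μ : Measure X} {ρ φ : X → ℕ} (hρ : AEMeasurable ρ μ)
    (hφ : AEMeasurable φ μ) (n k : ℕ) : NullMeasurableSet {y | ρ y = k + 2 ∧ n < φ y} μ :=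
  (hρ.nullMeasurable (measurableSet_singleton (k + 2))).inter (hφ.nullMeasurable measurableSet_Ioi)

namespace IsTowerAverage

variable {μτ μ0 : Measure X} {F : X → X} {ρ τ : X → ℕ} {c : ℝ}

theorem pos [IsProbabilityMeasure μτ] (h : IsTowerAverage μτ μ0 F ρ c) : 0 < c := by
  have huniv := h Set.univ MeasurableSet.univ
  rw [measure_univ, ENNReal.toReal_one] at huniv
  by_contra! hc
  have : 1 / c * ∑' k : ℕ, (μ0 {y | k < ρ y ∧ F^[k] y ∈ Set.univ}).toReal ≤ 0 :=
    mul_nonpos_of_nonpos_of_nonneg (one_div_nonpos.2 hc)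
      (tsum_nonneg fun _ => ENNReal.toReal_nonneg)
  linarith

section

variable [IsProbabilityMeasure μτ] (h : IsTowerAverage μτ μ0 F ρ c)
  (hρ : Integrable (fun x => (ρ x : ℝ)) μ0)
include h hρ

theorem ofReal_mul_measure {A : Set X} (hA : MeasurableSet A) :
    ENNReal.ofReal c * μτ A = ∑' k : ℕ, μ0 {y | k < ρ y ∧ F^[k] y ∈ A} := by
  have hS := tsum_measure_lt_and_mem_ne_top hρ F A
  rw [← ENNReal.ofReal_toReal (measure_ne_top μτ A), ← ENNReal.ofReal_mul h.pos.le, h A hA,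
    ← ENNReal.tsum_toReal_eq (ENNReal.ne_top_of_tsum_ne_top hS), ← mul_assoc,
    mul_one_div_cancel h.pos.ne', one_mul, ENNReal.ofReal_toReal hS]

theorem measure_preimage_null {N : Set X} (hN : μτ N = 0) (k : ℕ) :
    μ0 {y | k < ρ y ∧ F^[k] y ∈ N} = 0 := by
  have hT := h.ofReal_mul_measure hρ (measurableSet_toMeasurable μτ N)
  rw [measure_toMeasurable, hN, mul_zero, eq_comm, ENNReal.tsum_eq_zero] at hT
  refine measure_mono_null ?_ (hT k)
  exact fun y hy => ⟨hy.1, subset_toMeasurable μτ N hy.2⟩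

theorem preimage_ae_eq {A B : Set X} (hAB : A =ᵐ[μτ] B) (k : ℕ) :
    {y | k < ρ y ∧ F^[k] y ∈ A} =ᵐ[μ0] {y | k < ρ y ∧ F^[k] y ∈ B} := by
  have hdiff : ∀ {S T : Set X}, μτ (S \ T) = 0 →
      μ0 ({y | k < ρ y ∧ F^[k] y ∈ S} \ {y | k < ρ y ∧ F^[k] y ∈ T}) = 0 := fun hST => by
    refine measure_mono_null ?_ (h.measure_preimage_null hρ hST k)
    rintro y ⟨⟨hk, hS⟩, hnT⟩
    exact ⟨hk, hS, fun hT => hnT ⟨hk, hT⟩⟩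
  rw [ae_eq_set] at hAB ⊢
  exact ⟨hdiff hAB.1, hdiff hAB.2⟩

theorem ofReal_mul_measure₀ {A : Set X} (hA : NullMeasurableSet A μτ) :
    ENNReal.ofReal c * μτ A = ∑' k : ℕ, μ0 {y | k < ρ y ∧ F^[k] y ∈ A} := by
  rw [← measure_congr hA.toMeasurable_ae_eq,
    h.ofReal_mul_measure hρ (measurableSet_toMeasurable μτ A)]
  exact tsum_congr fun k => measure_congr (h.preimage_ae_eq hρ hA.toMeasurable_ae_eq k)

theorem aemeasurable_returnStep (hF : Measurable F) (hτ : AEMeasurable τ μτ) (k : ℕ) :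
    AEMeasurable (returnStep F ρ τ k) μ0 := by
  have hmk : ∀ᵐ y ∂μ0, k < ρ y → τ (F^[k] y) = hτ.mk τ (F^[k] y) := by
    rw [ae_iff]
    exact measure_mono_null (fun y hy => Classical.not_imp.1 hy)
      (h.measure_preimage_null hρ (ae_iff.1 hτ.ae_eq_mk) k)
  refine ((hτ.measurable_mk.comp (hF.iterate k)).aemeasurable.indicator₀
    ((aemeasurable_of_integrable_natCast hρ).nullMeasurable (measurableSet_Ioi (a := k)))).congr ?_
  filter_upwards [hmk] with y hy
  by_cases hk : k < ρ y
  · simp [returnStep, hk, hy hk]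
  · simp [returnStep, hk]

theorem aemeasurable_sum_restrict (hF : Measurable F) (hτ : AEMeasurable τ μτ) (k : ℕ)
    {s : Set X} (hs : s ⊆ {y | k ≤ ρ y}) :
    AEMeasurable (fun y => ∑ i ∈ range k, τ (F^[i] y)) (μ0.restrict s) := by
  refine (Finset.aemeasurable_sum (range k) fun i _ =>
    (h.aemeasurable_returnStep hρ hF hτ i).mono_measure Measure.restrict_le_self).congr ?_
  have hρk : NullMeasurableSet {y | k ≤ ρ y} μ0 :=
    (aemeasurable_of_integrable_natCast hρ).nullMeasurable (measurableSet_Ici (a := k))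
  refine ae_restrict_of_ae_restrict_of_subset hs
    ((ae_restrict_iff'₀ hρk).2 (ae_of_all _ fun y hy => ?_))
  simp only [Finset.sum_apply]
  exact sum_congr rfl fun i hi => if_pos (by simp at hi; exact lt_of_lt_of_le hi hy)

theorem ofReal_mul_tsum_measure_add_lt (hF : Measurable F) (hτ : AEMeasurable τ μτ) (n : ℕ) :
    ENNReal.ofReal c * ∑' j, μτ {x | n + j < τ x}
      = ∫⁻ y, ∑ k ∈ range (ρ y), ((τ (F^[k] y) - n : ℕ) : ℝ≥0∞) ∂μ0 := by
  have hstep := h.aemeasurable_returnStep hρ hF hτ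
  have hlt : ∀ m, ENNReal.ofReal c * μτ {x | m < τ x}
      = ∑' k : ℕ, μ0 {y | m < returnStep F ρ τ k y} := fun m => by
    rw [h.ofReal_mul_measure₀ hρ (A := {x | m < τ x}) (hτ.nullMeasurable measurableSet_Ioi)]
    simp only [lt_returnStep_iff, Set.mem_ofPred_eq]
  have hsub : ∀ k, AEMeasurable (fun y => ((returnStep F ρ τ k y - n : ℕ) : ℝ≥0∞)) μ0 :=
    fun k => (measurable_from_nat (f := fun a : ℕ => ((a - n : ℕ) : ℝ≥0∞))).comp_aemeasurable
      (hstep k)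
  rw [← ENNReal.tsum_mul_left, tsum_congr fun j => hlt (n + j), ENNReal.tsum_comm,
    tsum_congr fun k => tsum_measure_add_lt (hstep k) n, ← lintegral_tsum hsub]
  refine lintegral_congr fun y => (tsum_eq_sum (s := range (ρ y)) fun k hk => ?_).trans ?_
  · simp [returnStep, show ¬k < ρ y by simpa using hk]
  · exact sum_congr rfl fun k hk => by simp [returnStep, Finset.mem_range.1 hk]

theorem mul_tsum_toReal_measure_add_lt (hF : Measurable F) (hτ : AEMeasurable τ μτ) (n : ℕ) :
    c * ∑' j, (μτ {x | n + j < τ x}).toReal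
      = (∫⁻ y, ∑ k ∈ range (ρ y), ((τ (F^[k] y) - n : ℕ) : ℝ≥0∞) ∂μ0).toReal := by
  rw [← ENNReal.tsum_toReal_eq fun _ => measure_ne_top _ _, ← ENNReal.toReal_ofReal h.pos.le,
    ← ENNReal.toReal_mul, h.ofReal_mul_tsum_measure_add_lt hρ hF hτ n]

/-- Kac's formula `φ̄ = ρ̄ τ̄`. -/
theorem mul_integral_eq (hF : Measurable F) (hτ : AEMeasurable τ μτ) {φ : X → ℕ}
    (hφm : AEMeasurable φ μ0) (hφ : ∀ y, φ y = ∑ k ∈ range (ρ y), τ (F^[k] y)) :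
    c * ∫ x, (τ x : ℝ) ∂μτ = ∫ y, (φ y : ℝ) ∂μ0 := by
  have hK := h.mul_tsum_toReal_measure_add_lt hρ hF hτ 0
  simp only [zero_add, Nat.sub_zero, ← Nat.cast_sum, ← hφ] at hK
  rw [integral_natCast_eq_toReal_lintegral hτ, integral_natCast_eq_toReal_lintegral hφm, ← hK,
    ← tsum_measure_lt hτ, ENNReal.tsum_toReal_eq fun _ => measure_ne_top _ _]

variable (hF : Measurable F) (hτ : AEMeasurable τ μτ)
include hF hτ

theorem aemeasurable_penultimateReturn_summand {φ : X → ℕ} (hφm : AEMeasurable φ μ0) (n k : ℕ) :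
    AEMeasurable ({y | ρ y = k + 2 ∧ n < φ y}.indicator
      fun y => ((∑ i ∈ range (k + 1), τ (F^[i] y) : ℕ) : ℝ≥0∞)) μ0 :=
  (aemeasurable_indicator_iff₀ (nullMeasurableSet_eq_add_two
    (aemeasurable_of_integrable_natCast hρ) hφm n k)).2 (measurable_from_nat.comp_aemeasurable
      (h.aemeasurable_sum_restrict hρ hF hτ (k + 1) fun y hy => by simp [hy.1]))

theorem tsum_setIntegral_eq_toReal_lintegral {φ : X → ℕ} (hφ : Integrable (fun x => (φ x : ℝ)) μ0)
    (hφsum : ∀ y, φ y = ∑ k ∈ range (ρ y), τ (F^[k] y)) (n : ℕ) :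
    ∑' k : ℕ, ∫ y in {y | ρ y = k + 2 ∧ n < φ y}, ((∑ i ∈ range (k + 1), τ (F^[i] y) : ℕ) : ℝ) ∂μ0
      = (∫⁻ y, penultimateReturn F ρ τ φ n y ∂μ0).toReal := by
  have hφm := aemeasurable_of_integrable_natCast hφ
  have hfin : ∫⁻ y, penultimateReturn F ρ τ φ n y ∂μ0 ≠ ⊤ :=
    ne_top_of_le_ne_top (lintegral_natCast_ne_top hφ)
      (lintegral_mono (penultimateReturn_le hφsum n))
  unfold penultimateReturn at hfin ⊢
  rw [lintegral_tsum (h.aemeasurable_penultimateReturn_summand hρ hF hτ hφm n)] at hfin ⊢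
  rw [ENNReal.tsum_toReal_eq (ENNReal.ne_top_of_tsum_ne_top hfin)]
  refine tsum_congr fun k => ?_
  rw [lintegral_indicator₀ (nullMeasurableSet_eq_add_two
      (aemeasurable_of_integrable_natCast hρ) hφm n k),
    integral_natCast_eq_toReal_lintegral
      (h.aemeasurable_sum_restrict hρ hF hτ (k + 1) fun y hy => by simp [hy.1])]

end

theorem abs_tsum_sub_le [IsFiniteMeasure μ0] [IsProbabilityMeasure μτ]
    (h : IsTowerAverage μτ μ0 F ρ c) (hρ : Integrable (fun x => (ρ x : ℝ)) μ0) (hF : Measurable F)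
    (hτ : Integrable (fun x => (τ x : ℝ)) μτ) {φ : X → ℕ} (hφ : Integrable (fun x => (φ x : ℝ)) μ0)
    (hφsum : ∀ y, φ y = ∑ k ∈ range (ρ y), τ (F^[k] y)) {φbar τbar : ℝ}
    (hφbar : φbar = ∫ x, (φ x : ℝ) ∂μ0) (hτbar : τbar = ∫ x, (τ x : ℝ) ∂μτ) (n : ℕ) :
    |∑' j : ℕ, (1 / φbar * (μ0 {y | n + j < φ y}).toReal
        - 1 / τbar * (μτ {y | n + j < τ y}).toReal)|
      ≤ 1 / φbar * ∑' k : ℕ, ∫ y in {y | ρ y = k + 2 ∧ n < φ y},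
          ((∑ i ∈ range (k + 1), τ (F^[i] y) : ℕ) : ℝ) ∂μ0 := by
  have hφm := aemeasurable_of_integrable_natCast hφ
  have hτm := aemeasurable_of_integrable_natCast hτ
  set C := ∫⁻ y, ∑ k ∈ range (ρ y), ((τ (F^[k] y) - n : ℕ) : ℝ≥0∞) ∂μ0
  set E := ∫⁻ y, penultimateReturn F ρ τ φ n y ∂μ0
  have hAfin := tsum_measure_add_lt_ne_top hφ n
  rw [tsum_measure_add_lt hφm] at hAfin
  have hEfin : E ≠ ⊤ := ne_top_of_le_ne_top (lintegral_natCast_ne_top hφ)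
    (lintegral_mono (penultimateReturn_le hφsum n))
  have hCA : C ≤ ∫⁻ y, ((φ y - n : ℕ) : ℝ≥0∞) ∂μ0 := lintegral_mono (sum_tsub_le_tsub hφsum n)
  have hACE : ∫⁻ y, ((φ y - n : ℕ) : ℝ≥0∞) ∂μ0 ≤ C + E := by
    have hEm : AEMeasurable (penultimateReturn F ρ τ φ n) μ0 :=
      .tsum (h.aemeasurable_penultimateReturn_summand hρ hF hτm hφm n)
    rw [← lintegral_add_right' _ hEm]
    exact lintegral_mono (tsub_le_sum_tsub_add_penultimateReturn hφsum n)
  have hCfin : C ≠ ⊤ := ne_top_of_le_ne_top hAfin hCA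
  rw [Summable.tsum_sub ((ENNReal.summable_toReal (tsum_measure_add_lt_ne_top hφ n)).mul_left _)
    ((ENNReal.summable_toReal (tsum_measure_add_lt_ne_top hτ n)).mul_left _), tsum_mul_left,
    tsum_mul_left, tsum_toReal_measure_add_lt hφm,
    h.tsum_setIntegral_eq_toReal_lintegral hρ hF hτm hφ hφsum]
  refine abs_one_div_mul_sub_le (hφbar ▸ integral_nonneg fun _ => Nat.cast_nonneg _) h.pos.ne'
    (by rw [hφbar, hτbar, h.mul_integral_eq hρ hF hτm hφm hφsum])
    (h.mul_tsum_toReal_measure_add_lt hρ hF hτm n) (ENNReal.toReal_mono hAfin hCA) ?_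
  rw [← ENNReal.toReal_add hCfin hEfin]
  exact ENNReal.toReal_mono (ENNReal.add_ne_top.2 ⟨hCfin, hEfin⟩) hACE

end IsTowerAverage

end Tower

theorem stmt12_general {X : Type*} [MeasurableSpace X] (f : X → X) (Y : Set X)
    (μ0 μτ : Measure X) [IsProbabilityMeasure μ0] [IsProbabilityMeasure μτ]
    (ρ : X → ℕ) (φ : X → ℕ) (hφ : ∀ x, φ x = tauK f Y (ρ x) x)
    (hpresτ : MeasurePreserving (fun x => f^[tauFR f Y x] x) μτ μτ)
    (hρint : Integrable (fun x => (ρ x : ℝ)) μ0)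
    (ρbar : ℝ)
    (hμτ : ∀ A : Set X, MeasurableSet A → (μτ A).toReal
      = (1 / ρbar) * ∑' k : ℕ, (μ0 {y | k < ρ y ∧ f^[tauK f Y k y] y ∈ A}).toReal)
    (φbar τbar : ℝ)
    (hφbar : φbar = ∫ x, (φ x : ℝ) ∂μ0) (hτbar : τbar = ∫ x, (tauFR f Y x : ℝ) ∂μτ)
    (hφint : Integrable (fun x => (φ x : ℝ)) μ0)
    (hτint : Integrable (fun x => (tauFR f Y x : ℝ)) μτ) :
    ∀ n : ℕ, 1 ≤ n →
      |∑' j : ℕ, ((1 / φbar) * (μ0 {y | n + j < φ y}).toReal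
          - (1 / τbar) * (μτ {y | n + j < tauFR f Y y}).toReal)|
        ≤ (1 / φbar) * ∑' k : ℕ,
            ∫ y in {y | ρ y = k + 2 ∧ n < φ y}, (tauK f Y (k + 1) y : ℝ) ∂μ0 := by
  intro n _
  have hT : IsTowerAverage μτ μ0 (fun x => f^[tauFR f Y x] x) ρ ρbar := fun A hA => by
    simpa only [iterate_tauK] using hμτ A hA
  simpa only [tauK_eq_sum] using hT.abs_tsum_sub_le hρint hpresτ.measurable hτint hφint
    (fun y => by rw [hφ, tauK_eq_sum]) hφbar hτbar n

theorem stmt12 {X : Type*} [MeasurableSpace X] (f : X → X) (Y : Set X)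
    (μ0 μτ : Measure X) [IsProbabilityMeasure μ0] [IsProbabilityMeasure μτ]
    (hμ0Y : μ0 Yᶜ = 0) (hμτY : μτ Yᶜ = 0)
    (hequiv : μ0 ≪ μτ ∧ μτ ≪ μ0)
    (ρ : X → ℕ) (φ : X → ℕ) (hφ : ∀ x, φ x = tauK f Y (ρ x) x)
    (hpres0 : MeasurePreserving (fun x => f^[φ x] x) μ0 μ0)
    (hpresτ : MeasurePreserving (fun x => f^[tauFR f Y x] x) μτ μτ)
    (hρint : Integrable (fun x => (ρ x : ℝ)) μ0)
    (ρbar : ℝ) (hρbar : ρbar = ∫ x, (ρ x : ℝ) ∂μ0)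
    (hμτ : ∀ A : Set X, MeasurableSet A → (μτ A).toReal
      = (1 / ρbar) * ∑' k : ℕ, (μ0 {y | k < ρ y ∧ f^[tauK f Y k y] y ∈ A}).toReal)
    (φbar τbar : ℝ)
    (hφbar : φbar = ∫ x, (φ x : ℝ) ∂μ0) (hτbar : τbar = ∫ x, (tauFR f Y x : ℝ) ∂μτ)
    (hφint : Integrable (fun x => (φ x : ℝ)) μ0)
    (hτint : Integrable (fun x => (tauFR f Y x : ℝ)) μτ) :
    ∀ n : ℕ, 1 ≤ n →
      |∑' j : ℕ, ((1 / φbar) * (μ0 {y | n + j < φ y}).toReal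
          - (1 / τbar) * (μτ {y | n + j < tauFR f Y y}).toReal)|
        ≤ (1 / φbar) * ∑' k : ℕ,
            ∫ y in {y | ρ y = k + 2 ∧ n < φ y}, (tauK f Y (k + 1) y : ℝ) ∂μ0 :=
  stmt12_general f Y μ0 μτ ρ φ hφ hpresτ hρint ρbar hμτ φbar τbar hφbar hτbar hφint hτint
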